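/- Let f : ℝ³ → ℂ be a Schwartz function. Then ‖ ∂_r² f ‖_{L²(ℝ³)} ≤ 9 · sqrt( ‖Δf‖_{L²(ℝ³)}² + ‖f‖_{L²(ℝ³)}² ), i.e. the squared radial derivative is bounded from H²(ℝ³) to L²(ℝ³) with norm at most 9. -/

import Mathlib

/-!
At `x ≠ 0` the derivative of `x ↦ x / |x|` vanishes in the direction `x`, so `∂_r² f(x)` is the
Hessian `D²f(x)` evaluated twice at the unit vector `x / |x|`; expanding in the standard basis and
applying Cauchy–Schwarz gives `|∂_r² f|² ≤ ∑ᵢⱼ |∂ᵢ∂ⱼ f|²` pointwise. Two integrations by parts and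
the symmetry of second derivatives give `∫ |∂ᵢ∂ⱼ f|² = ∫ ⟪∂ᵢ² f, ∂ⱼ² f⟫`, and summing over `i, j`
yields `‖∂_r² f‖₂ ≤ ‖Δf‖₂`.
-/

open MeasureTheory

/-- The Euclidean Laplacian of `f : ℝ³ → ℂ`, computed as the sum of the second
partial derivatives in the coordinate directions. -/
noncomputable def laplacian (f : EuclideanSpace ℝ (Fin 3) → ℂ)
    (x : EuclideanSpace ℝ (Fin 3)) : ℂ :=
  ∑ i : Fin 3,
    fderiv ℝ (fun y => fderiv ℝ f y (EuclideanSpace.single i 1)) x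
      (EuclideanSpace.single i 1)

/-- The radial derivative `∂_r f (x) = ⟨x/|x|, ∇f(x)⟩`. -/
noncomputable def radialDeriv (f : EuclideanSpace ℝ (Fin 3) → ℂ)
    (x : EuclideanSpace ℝ (Fin 3)) : ℂ :=
  fderiv ℝ f x (‖x‖⁻¹ • x)

open scoped RealInnerProductSpace SchwartzMap LineDeriv Laplacian

lemma eLpNorm_two_le_sqrt_integral_of_sq_le {α F : Type*} [MeasurableSpace α] {μ : Measure α}
    [NormedAddCommGroup F] {g : α → F} {H : α → ℝ} (hH : Integrable H μ)
    (hg : ∀ x, ‖g x‖ ^ 2 ≤ H x) :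
    eLpNorm g 2 μ ≤ ENNReal.ofReal √(∫ x, H x ∂μ) := by
  have hH_nonneg (x : α) : 0 ≤ H x := (sq_nonneg _).trans (hg x)
  rw [eLpNorm_eq_lintegral_rpow_enorm_toReal two_ne_zero ENNReal.ofNat_ne_top,
    Real.sqrt_eq_rpow, ← ENNReal.ofReal_rpow_of_nonneg (integral_nonneg hH_nonneg) (by norm_num),
    ofReal_integral_eq_lintegral_ofReal hH (ae_of_all _ hH_nonneg), ENNReal.toReal_ofNat]
  gcongr with x
  rw [← ofReal_norm, ENNReal.ofReal_rpow_of_nonneg (norm_nonneg _) zero_le_two]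
  exact ENNReal.ofReal_le_ofReal (by exact_mod_cast hg x)

section OrthonormalBasis

variable {ι E F : Type*} [Fintype ι] [NormedAddCommGroup E] [InnerProductSpace ℝ E]
  [NormedAddCommGroup F] [NormedSpace ℝ F]

lemma norm_sq_apply_le_sum_norm_sq_apply (b : OrthonormalBasis ι ℝ E) (L : E →L[ℝ] F) (v : E) :
    ‖L v‖ ^ 2 ≤ ‖v‖ ^ 2 * ∑ i, ‖L (b i)‖ ^ 2 := by
  have hexpand : L v = ∑ i, ⟪b i, v⟫ • L (b i) := by
    conv_lhs => rw [← b.sum_repr' v]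
    simp only [map_sum, map_smul]
  calc ‖L v‖ ^ 2 ≤ (∑ i, |⟪b i, v⟫| * ‖L (b i)‖) ^ 2 := by
        rw [hexpand]
        gcongr
        refine (norm_sum_le _ _).trans_eq ?_
        simp only [norm_smul, Real.norm_eq_abs]
    _ ≤ (∑ i, |⟪b i, v⟫| ^ 2) * ∑ i, ‖L (b i)‖ ^ 2 := Finset.sum_mul_sq_le_sq_mul_sq _ _ _
    _ = ‖v‖ ^ 2 * ∑ i, ‖L (b i)‖ ^ 2 := by simp only [sq_abs, b.sum_sq_inner_right]

lemma norm_sq_apply_apply_le_sum_norm_sq_apply_apply (b : OrthonormalBasis ι ℝ E)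
    (A : E →L[ℝ] E →L[ℝ] F) (v w : E) :
    ‖A v w‖ ^ 2 ≤ ‖v‖ ^ 2 * ‖w‖ ^ 2 * ∑ i, ∑ j, ‖A (b i) (b j)‖ ^ 2 := by
  calc ‖A v w‖ ^ 2 ≤ ‖w‖ ^ 2 * ∑ j, ‖A v (b j)‖ ^ 2 :=
        norm_sq_apply_le_sum_norm_sq_apply b (A v) w
    _ ≤ ‖w‖ ^ 2 * ∑ j, ‖v‖ ^ 2 * ∑ i, ‖A (b i) (b j)‖ ^ 2 := by
        gcongr with j
        exact norm_sq_apply_le_sum_norm_sq_apply b (A.flip (b j)) v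
    _ = ‖v‖ ^ 2 * ‖w‖ ^ 2 * ∑ i, ∑ j, ‖A (b i) (b j)‖ ^ 2 := by
        rw [← Finset.mul_sum, Finset.sum_comm]; ring

end OrthonormalBasis

namespace NormedSpace

variable {E : Type*} [NormedAddCommGroup E] [InnerProductSpace ℝ E] {x : E}

lemma differentiableAt_normalize (hx : x ≠ 0) : DifferentiableAt ℝ normalize x :=
  ((differentiableAt_id.norm ℝ hx).inv (norm_ne_zero_iff.2 hx)).smul differentiableAt_id

lemma fderiv_normalize_apply_self (hx : x ≠ 0) : fderiv ℝ normalize x x = 0 := by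
  have hconst : HasLineDerivAt ℝ normalize 0 x x := by
    refine (hasDerivAt_const (0 : ℝ) (normalize x)).congr_of_eventuallyEq ?_
    filter_upwards [Ioi_mem_nhds (show (-1 : ℝ) < 0 by norm_num)] with t ht
    rw [show x + t • x = (1 + t) • x by module,
      normalize_smul_of_pos (by linarith [Set.mem_Ioi.1 ht])]
  exact ((differentiableAt_normalize hx).hasFDerivAt.hasLineDerivAt x).unique hconst

end NormedSpace

namespace SchwartzMap

section LineDeriv

variable {E F : Type*} [NormedAddCommGroup E] [NormedSpace ℝ E]
  [NormedAddCommGroup F] [NormedSpace ℝ F]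

lemma coe_lineDerivOp (f : 𝓢(E, F)) (v : E) :
    ((∂_{v} f : 𝓢(E, F)) : E → F) = fun x => fderiv ℝ f x v :=
  funext (lineDerivOp_apply_eq_fderiv v f)

lemma lineDerivOp_lineDerivOp_apply (f : 𝓢(E, F)) (v w x : E) :
    ∂_{v} (∂_{w} f) x = fderiv ℝ (fderiv ℝ f) x v w := by
  have hf : DifferentiableAt ℝ (fderiv ℝ f) x :=
    ((f.smooth 2).fderiv_right (m := 1) (by norm_num)).differentiable one_ne_zero x
  rw [lineDerivOp_apply_eq_fderiv, coe_lineDerivOp, fderiv_clm_apply hf (differentiableAt_const w)]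
  simp

lemma lineDerivOp_comm (f : 𝓢(E, F)) (v w : E) : ∂_{v} (∂_{w} f) = ∂_{w} (∂_{v} f) := by
  ext x
  rw [lineDerivOp_lineDerivOp_apply, lineDerivOp_lineDerivOp_apply]
  exact ((f.smooth 2).contDiffAt.isSymmSndFDerivAt (by simp)) v w

end LineDeriv

section IntegrationByParts

variable {E F : Type*} [NormedAddCommGroup E] [NormedSpace ℝ E] [FiniteDimensional ℝ E]
  [MeasurableSpace E] [BorelSpace E] {μ : Measure E} [μ.IsAddHaarMeasure]
  [NormedAddCommGroup F] [InnerProductSpace ℝ F]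

lemma integral_norm_sq_lineDerivOp_lineDerivOp (f : 𝓢(E, F)) (v w : E) :
    ∫ x, ‖∂_{v} (∂_{w} f) x‖ ^ 2 ∂μ = ∫ x, ⟪∂_{v} (∂_{v} f) x, ∂_{w} (∂_{w} f) x⟫ ∂μ := by
  have ibp (g h : 𝓢(E, F)) (u : E) :
      ∫ x, ⟪g x, ∂_{u} h x⟫ ∂μ = -∫ x, ⟪∂_{u} g x, h x⟫ ∂μ :=
    integral_bilinear_lineDerivOp_right_eq_neg_left g h (innerSL ℝ) u
  calc ∫ x, ‖∂_{v} (∂_{w} f) x‖ ^ 2 ∂μ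
      = -∫ x, ⟪∂_{v} (∂_{v} (∂_{w} f)) x, ∂_{w} f x⟫ ∂μ := by
        simpa only [real_inner_self_eq_norm_sq] using ibp (∂_{v} (∂_{w} f)) (∂_{w} f) v
    _ = -∫ x, ⟪∂_{w} (∂_{v} (∂_{v} f)) x, ∂_{w} f x⟫ ∂μ := by
        rw [lineDerivOp_comm f v w, lineDerivOp_comm (∂_{v} f) v w]
    _ = ∫ x, ⟪∂_{v} (∂_{v} f) x, ∂_{w} (∂_{w} f) x⟫ ∂μ :=
        (ibp (∂_{v} (∂_{v} f)) (∂_{w} f) w).symm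

end IntegrationByParts

section Laplacian

variable {E F : Type*} [NormedAddCommGroup E] [InnerProductSpace ℝ E] [FiniteDimensional ℝ E]
  [MeasurableSpace E] [BorelSpace E] {μ : Measure E} [μ.IsAddHaarMeasure]
  [NormedAddCommGroup F] [InnerProductSpace ℝ F]

lemma integral_norm_sq_laplacian {ι : Type*} [Fintype ι] (b : OrthonormalBasis ι ℝ E)
    (f : 𝓢(E, F)) :
    ∫ x, ‖Δ f x‖ ^ 2 ∂μ = ∑ i, ∑ j, ∫ x, ‖∂_{b i} (∂_{b j} f) x‖ ^ 2 ∂μ := by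
  have hint (g h : 𝓢(E, F)) : Integrable (fun x => ⟪g x, h x⟫) μ :=
    (pairing (innerSL ℝ) g h).integrable
  simp_rw [integral_norm_sq_lineDerivOp_lineDerivOp, ← integral_finsetSum _ fun _ _ => hint _ _,
    laplacian_eq_sum b, ← real_inner_self_eq_norm_sq, sum_apply, sum_inner, inner_sum]
  exact integral_finsetSum _ fun _ _ => integrable_finsetSum _ fun _ _ => hint _ _

end Laplacian

end SchwartzMap

section Euclidean3

local notation "ℝ³" => EuclideanSpace ℝ (Fin 3)

lemma radialDeriv_radialDeriv_eq {g : ℝ³ → ℂ} (hg : ContDiff ℝ 2 g) {x : ℝ³} (hx : x ≠ 0) :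
    radialDeriv (radialDeriv g) x
      = fderiv ℝ (fderiv ℝ g) x (NormedSpace.normalize x) (NormedSpace.normalize x) := by
  have hg' : DifferentiableAt ℝ (fderiv ℝ g) x :=
    (hg.fderiv_right (m := 1) (by norm_num)).differentiable one_ne_zero x
  change fderiv ℝ (fun y => fderiv ℝ g y (NormedSpace.normalize y)) x (NormedSpace.normalize x) = _
  rw [fderiv_clm_apply hg' (NormedSpace.differentiableAt_normalize hx)]
  simp [NormedSpace.normalize, NormedSpace.fderiv_normalize_apply_self hx]

lemma norm_sq_radialDeriv_radialDeriv_le (f : 𝓢(ℝ³, ℂ)) (x : ℝ³) :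
    ‖radialDeriv (radialDeriv f) x‖ ^ 2
      ≤ ∑ i, ∑ j, ‖∂_{EuclideanSpace.basisFun (Fin 3) ℝ i}
          (∂_{EuclideanSpace.basisFun (Fin 3) ℝ j} f) x‖ ^ 2 := by
  rcases eq_or_ne x 0 with rfl | hx
  · simp only [radialDeriv, norm_zero, inv_zero, zero_smul, map_zero, ne_eq,
      OfNat.ofNat_ne_zero, not_false_eq_true, zero_pow]
    positivity
  simpa [radialDeriv_radialDeriv_eq (f.smooth 2) hx, NormedSpace.norm_normalize hx,
    SchwartzMap.lineDerivOp_lineDerivOp_apply] using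
    norm_sq_apply_apply_le_sum_norm_sq_apply_apply (EuclideanSpace.basisFun (Fin 3) ℝ)
      (fderiv ℝ (fderiv ℝ f) x) (NormedSpace.normalize x) (NormedSpace.normalize x)

lemma laplacian_eq_laplacian_schwartzMap (f : 𝓢(ℝ³, ℂ)) (x : ℝ³) : laplacian f x = Δ f x := by
  simp [laplacian, SchwartzMap.laplacian_eq_sum (EuclideanSpace.basisFun (Fin 3) ℝ),
    SchwartzMap.coe_lineDerivOp]

end Euclidean3

theorem radial_second_derivative_H2_bound
    (f : SchwartzMap (EuclideanSpace ℝ (Fin 3)) ℂ) :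
    eLpNorm
        (fun x => radialDeriv (radialDeriv (f : EuclideanSpace ℝ (Fin 3) → ℂ)) x)
        2 volume
      ≤ ENNReal.ofReal (9 * Real.sqrt
          ((∫ x, ‖laplacian (f : EuclideanSpace ℝ (Fin 3) → ℂ) x‖ ^ 2)
            + ∫ x, ‖f x‖ ^ 2)) := by
  let b := EuclideanSpace.basisFun (Fin 3) ℝ
  have hint (g : 𝓢(EuclideanSpace ℝ (Fin 3), ℂ)) : Integrable (fun x => ‖g x‖ ^ 2) :=
    (g.memLp 2).integrable_norm_pow two_ne_zero
  have hhessian : ∫ x, ∑ i, ∑ j, ‖∂_{b i} (∂_{b j} f) x‖ ^ 2 = ∫ x, ‖laplacian f x‖ ^ 2 := by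
    simp_rw [integral_finsetSum _ fun _ _ => integrable_finsetSum _ fun _ _ => hint _,
      integral_finsetSum _ fun _ _ => hint _, laplacian_eq_laplacian_schwartzMap,
      SchwartzMap.integral_norm_sq_laplacian b]
  calc _ ≤ ENNReal.ofReal √(∫ x, ∑ i, ∑ j, ‖∂_{b i} (∂_{b j} f) x‖ ^ 2) :=
        eLpNorm_two_le_sqrt_integral_of_sq_le
          (integrable_finsetSum _ fun _ _ => integrable_finsetSum _ fun _ _ => hint _)
          (norm_sq_radialDeriv_radialDeriv_le f)
    _ ≤ _ := by
        rw [hhessian]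
        refine ENNReal.ofReal_le_ofReal ((Real.sqrt_le_sqrt ?_).trans
          (le_mul_of_one_le_left (Real.sqrt_nonneg _) (by norm_num)))
        exact le_add_of_nonneg_right (integral_nonneg fun _ => sq_nonneg _)
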